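/- Given the second-order Taylor bound ‖p_ref(τ+h) − p_ref(τ) − h·p_ref'(τ) − (h²/2)·p_ref''(τ)‖ ≤ M·|h|³ for all |h| ≤ h₀, the one-step required acceleration from an on-path state with scaling α (so h = α·t_s) satisfies |u_req − α²·‖p_ref''(τ)‖| ≤ 2M·α³·t_s, for 0 < α·t_s ≤ h₀. -/

import Mathlib

/-! The look-ahead residual `r` differs from the quadratic Taylor term `(αt_s)²/2 • p''` by exactly
the Taylor remainder at `h = αt_s`, so the reverse triangle inequality bounds `|‖r‖ - (αt_s)²/2 ‖p''‖|`
by `M (αt_s)³`; multiplying by `2 / t_s²` gives the claim. -/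

lemma abs_norm_sub_mul_norm_le {E : Type*} [SeminormedAddCommGroup E] [NormedSpace ℝ E]
    (r v : E) {c : ℝ} (hc : 0 ≤ c) : |‖r‖ - c * ‖v‖| ≤ ‖r - c • v‖ := by
  simpa only [norm_smul, Real.norm_of_nonneg hc] using abs_norm_sub_norm_le r (c • v)

lemma abs_two_div_sq_mul_sub_le {t α x y M : ℝ} (ht : t ≠ 0)
    (h : |x - (α * t) ^ 2 / 2 * y| ≤ M * (α * t) ^ 3) :
    |2 / t ^ 2 * x - α ^ 2 * y| ≤ 2 * M * α ^ 3 * t := by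
  have hscale : 2 / t ^ 2 * x - α ^ 2 * y = 2 / t ^ 2 * (x - (α * t) ^ 2 / 2 * y) := by
    field_simp
  calc |2 / t ^ 2 * x - α ^ 2 * y| = 2 / t ^ 2 * |x - (α * t) ^ 2 / 2 * y| := by
        rw [hscale, abs_mul, abs_of_nonneg (by positivity)]
    _ ≤ 2 / t ^ 2 * (M * (α * t) ^ 3) := by gcongr
    _ = 2 * M * α ^ 3 * t := by field_simp

theorem stmt17_general (t_s h₀ M τ α : ℝ) (ht : 0 < t_s)
    (pref : ℝ → EuclideanSpace ℝ (Fin 2))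
    (p' p'' : EuclideanSpace ℝ (Fin 2))
    (htaylor : ∀ h : ℝ, |h| ≤ h₀ →
      ‖pref (τ + h) - pref τ - h • p' - (h ^ 2 / 2) • p''‖ ≤ M * |h| ^ 3)
    (hα : 0 < α * t_s) (hα2 : α * t_s ≤ h₀) :
    let r := pref (τ + α * t_s) - pref τ - t_s • (α • p')
    |(2 / t_s ^ 2) * ‖r‖ - α ^ 2 * ‖p''‖| ≤ 2 * M * α ^ 3 * t_s := by
  intro r
  have hh : |α * t_s| = α * t_s := abs_of_pos hα
  have hremainder : r - ((α * t_s) ^ 2 / 2) • p'' =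
      pref (τ + α * t_s) - pref τ - (α * t_s) • p' - ((α * t_s) ^ 2 / 2) • p'' := by
    simp only [r, smul_smul, mul_comm t_s α]
  have hbound := htaylor (α * t_s) (hh.symm ▸ hα2)
  rw [← hremainder, hh] at hbound
  exact abs_two_div_sq_mul_sub_le ht.ne'
    ((abs_norm_sub_mul_norm_le r p'' (by positivity)).trans hbound)

/-- Given a cubic Taylor-remainder bound, the one-step required acceleration
    from an on-path state with scaling `α` is within `2Mα³t_s` of
    `α²‖p_ref''(τ)‖`. -/
theorem stmt17 (t_s h₀ M τ α : ℝ) (ht : 0 < t_s) (hh₀ : 0 < h₀) (hM : 0 ≤ M)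
    (pref : ℝ → EuclideanSpace ℝ (Fin 2))
    (p' p'' : EuclideanSpace ℝ (Fin 2))
    (htaylor : ∀ h : ℝ, |h| ≤ h₀ →
      ‖pref (τ + h) - pref τ - h • p' - (h ^ 2 / 2) • p''‖ ≤ M * |h| ^ 3)
    (hα : 0 < α * t_s) (hα2 : α * t_s ≤ h₀) :
    let r := pref (τ + α * t_s) - pref τ - t_s • (α • p')
    |(2 / t_s ^ 2) * ‖r‖ - α ^ 2 * ‖p''‖| ≤ 2 * M * α ^ 3 * t_s :=
  stmt17_general t_s h₀ M τ α ht pref p' p'' htaylor hα hα2
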